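/- arXiv:2206.02027 — 6 statements merged into one kernel-verified Lean document; each statement's English description precedes it below -/
import Mathlib

section
/- Let S ⊆ ℝ^d be a nonempty closed set and let d_S(x) = infDist(x, S). If x ∉ S and d_S is (Fréchet) differentiable at x, then the gradient of d_S at x has Euclidean norm exactly 1 (the Eikonal equation ‖∇d_S(x)‖ = 1 holds). -/
open Metric

/-- **Eikonal equation for the distance function.**
If `S ⊆ ℝ^d` is a nonempty closed set, `x ∉ S`, and the distance function
`d_S = infDist · S` is differentiable at `x`, then `‖∇d_S(x)‖ = 1`. -/
theorem eikonal_distance_function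
    (d : ℕ) (S : Set (EuclideanSpace ℝ (Fin d)))
    (hS : S.Nonempty) (hScl : IsClosed S)
    (x : EuclideanSpace ℝ (Fin d)) (hx : x ∉ S)
    (hdiff : DifferentiableAt ℝ (fun y => Metric.infDist y S) x) :
    ‖gradient (fun y => Metric.infDist y S) x‖ = 1 := by
  set f : EuclideanSpace ℝ (Fin d) → ℝ := fun y => Metric.infDist y S with hf
  obtain ⟨y, hyS, hy⟩ := hScl.exists_infDist_eq_dist hS x
  set r : ℝ := dist x y with hr
  have hrpos : 0 < r := by
    have h := (hScl.notMem_iff_infDist_pos hS).mp hx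
    rwa [hy] at h
  -- upper bound
  have hupper : ‖gradient f x‖ ≤ 1 := by
    have h := norm_fderiv_le_of_lipschitz (x₀ := x) ℝ (lipschitz_infDist_pt S)
    simpa [gradient] using h
  -- lower bound via directional derivative
  set v : EuclideanSpace ℝ (Fin d) := y - x with hv
  have hvnorm : ‖v‖ = r := by rw [hv, hr, dist_eq_norm, norm_sub_rev]
  have hseg : ∀ t ∈ Set.Icc (0 : ℝ) 1, f (x + t • v) = r - t * r := by
    intro t ht
    have hdzy : dist (x + t • v) y = (1 - t) * r := by
      have : x + t • v - y = (1 - t) • (x - y) := by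
        rw [hv]; module
      rw [dist_eq_norm, this, norm_smul, Real.norm_eq_abs, abs_of_nonneg (by linarith [ht.2]),
        ← dist_eq_norm, ← hr]
    have hle : f (x + t • v) ≤ (1 - t) * r := by
      have := Metric.infDist_le_dist_of_mem (x := x + t • v) hyS
      rw [hdzy] at this; exact this
    have hge : (1 - t) * r ≤ f (x + t • v) := by
      have h1 : Metric.infDist x S ≤ Metric.infDist (x + t • v) S + dist x (x + t • v) :=
        Metric.infDist_le_infDist_add_dist
      have h2 : dist x (x + t • v) = t * r := by
        rw [dist_eq_norm]
        have : x - (x + t • v) = (-t) • v := by module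
        rw [this, norm_smul, Real.norm_eq_abs, abs_neg, abs_of_nonneg ht.1, hvnorm]
      rw [hy, h2] at h1
      show (1 - t) * r ≤ Metric.infDist (x + t • v) S
      linarith
    linarith [hle, hge]
  -- g t = f (x + t • v) has derivative (fderiv f x) v at 0
  have hline : HasDerivAt (fun t : ℝ => x + t • v) v 0 := by
    simpa using ((hasDerivAt_id (0:ℝ)).smul_const v).const_add x
  have hx0 : HasFDerivAt f (fderiv ℝ f x) (x + (0:ℝ) • v) := by
    simpa using hdiff.hasFDerivAt
  have hg : HasDerivAt (fun t : ℝ => f (x + t • v)) (fderiv ℝ f x v) 0 :=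
    by have := hx0.comp_hasDerivAt 0 hline; exact this
  have hg' : HasDerivWithinAt (fun t : ℝ => f (x + t • v)) (fderiv ℝ f x v)
      (Set.Icc (0:ℝ) 1) 0 := hg.hasDerivWithinAt
  have hlin : HasDerivWithinAt (fun t : ℝ => r - t * r) (-r) (Set.Icc (0:ℝ) 1) 0 := by
    simpa using (((hasDerivAt_id (0:ℝ)).mul_const r).const_sub r).hasDerivWithinAt
      (s := Set.Icc (0:ℝ) 1)
  have hcongr : HasDerivWithinAt (fun t : ℝ => r - t * r) (fderiv ℝ f x v)
      (Set.Icc (0:ℝ) 1) 0 := by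
    refine hg'.congr (fun t ht => (hseg t ht).symm) ?_
    simpa using (hseg 0 (Set.mem_Icc.mpr ⟨le_refl 0, zero_le_one⟩)).symm
  have hud : UniqueDiffWithinAt ℝ (Set.Icc (0:ℝ) 1) 0 :=
    (uniqueDiffOn_Icc zero_lt_one) 0 (Set.mem_Icc.mpr ⟨le_refl 0, zero_le_one⟩)
  have hderiv : fderiv ℝ f x v = -r := by
    have e1 := hcongr.derivWithin hud
    have e2 := hlin.derivWithin hud
    rw [e1] at e2; exact e2
  have hinner : inner ℝ (gradient f x) v = (-r : ℝ) := by
    rw [← hderiv]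
    have heq : fderiv ℝ f x
        = (InnerProductSpace.toDual ℝ (EuclideanSpace ℝ (Fin d))) (gradient f x) :=
      ((InnerProductSpace.toDual ℝ _).apply_symm_apply _).symm
    rw [heq, InnerProductSpace.toDual_apply_apply]
  have hlower : 1 ≤ ‖gradient f x‖ := by
    have h1 : |inner ℝ (gradient f x) v| ≤ ‖gradient f x‖ * ‖v‖ := abs_real_inner_le_norm _ _
    rw [hinner, abs_neg, abs_of_pos hrpos, hvnorm] at h1
    nlinarith [norm_nonneg (gradient f x)]
  linarith
end

section
/- Let S ⊆ ℝ^d be a nonempty closed set, let d_S(x) = infDist(x, S), and suppose x ∉ S and d_S is differentiable at x with gradient v = ∇d_S(x). Then the point p = x − d_S(x)·v belongs to S and satisfies ‖x − p‖ = d_S(x); that is, p is a nearest point of S to x. -/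
/-- **The closest-point projection lands on `S`.**
If `S ⊆ ℝ^d` is nonempty and closed, `x ∉ S`, and `d_S = infDist · S` is
differentiable at `x` with gradient `v`, then `p = x − d_S(x) • v` belongs to `S`
and `‖x − p‖ = d_S(x)`, i.e. `p` is a nearest point of `S` to `x`. -/
theorem closest_point_projection_mem
    (d : ℕ) (S : Set (EuclideanSpace ℝ (Fin d)))
    (hS : S.Nonempty) (hScl : IsClosed S)
    (x : EuclideanSpace ℝ (Fin d)) (hx : x ∉ S)
    (hdiff : DifferentiableAt ℝ (fun y => Metric.infDist y S) x)
    (v : EuclideanSpace ℝ (Fin d))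
    (hv : v = gradient (fun y => Metric.infDist y S) x)
    (p : EuclideanSpace ℝ (Fin d))
    (hp : p = x - Metric.infDist x S • v) :
    p ∈ S ∧ ‖x - p‖ = Metric.infDist x S := by
  classical
  set f : EuclideanSpace ℝ (Fin d) → ℝ := fun y => Metric.infDist y S with hfdef
  obtain ⟨y, hyS, hxy⟩ := hScl.exists_infDist_eq_dist hS x
  set D : ℝ := Metric.infDist x S with hDdef
  have hD0 : 0 < D := (hScl.notMem_iff_infDist_pos hS).1 hx
  have hxyD : ‖x - y‖ = D := by
    show ‖x - y‖ = D
    rw [hxy, dist_eq_norm]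
  -- gradient as fderiv
  have hgrad : HasGradientAt f v x := by
    rw [hv]; exact hdiff.hasGradientAt
  have hF : HasFDerivAt f ((InnerProductSpace.toDual ℝ _) v) x :=
    hasGradientAt_iff_hasFDerivAt.1 hgrad
  -- ‖v‖ ≤ 1
  have hvle : ‖v‖ ≤ 1 := by
    have hlip : LipschitzWith 1 f := Metric.lipschitz_infDist_pt S
    have := norm_fderiv_le_of_lipschitz ℝ hlip (x₀ := x)
    rwa [hF.fderiv, (InnerProductSpace.toDual ℝ _).norm_map, NNReal.coe_one] at this
  -- derivative of f along the segment towards y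
  have hline : HasDerivAt (fun t : ℝ => x + t • (y - x)) (y - x) 0 := by
    have h1 : HasDerivAt (fun t : ℝ => t • (y - x)) ((1 : ℝ) • (y - x)) 0 :=
      (hasDerivAt_id (0 : ℝ)).smul_const (y - x)
    simpa using h1.const_add x
  have hcomp : HasDerivAt (fun t : ℝ => f (x + t • (y - x)))
      (inner ℝ v (y - x) : ℝ) 0 := by
    have hx0 : x + (0:ℝ) • (y - x) = x := by simp
    rw [← hx0] at hF
    have := hF.comp_hasDerivAt 0 hline
    simp only [InnerProductSpace.toDual_apply_apply] at this
    exact this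
  -- on [0,1] this curve equals t ↦ D - t * D
  have hseg : ∀ t : ℝ, 0 ≤ t → t ≤ 1 → f (x + t • (y - x)) = D - t * D := by
    intro t ht0 ht1
    have hzy : (x + t • (y - x)) - y = (1 - t) • (x - y) := by
      rw [sub_smul, one_smul, smul_sub]; module
    have hub : f (x + t • (y - x)) ≤ D - t * D := by
      calc f (x + t • (y - x)) ≤ dist (x + t • (y - x)) y := Metric.infDist_le_dist_of_mem hyS
        _ = ‖(1 - t) • (x - y)‖ := by rw [dist_eq_norm, hzy]
        _ = (1 - t) * D := by
            rw [norm_smul, Real.norm_eq_abs, abs_of_nonneg (by linarith), hxyD]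
        _ = D - t * D := by ring
    have hlb : D - t * D ≤ f (x + t • (y - x)) := by
      have h1 : D ≤ f (x + t • (y - x)) + dist x (x + t • (y - x)) :=
        Metric.infDist_le_infDist_add_dist
      have h2 : dist x (x + t • (y - x)) = t * D := by
        rw [dist_eq_norm]
        have : x - (x + t • (y - x)) = t • (x - y) := by rw [smul_sub]; module
        rw [this, norm_smul, Real.norm_eq_abs, abs_of_nonneg ht0, hxyD]
      linarith
    linarith
  -- compute the one-sided derivative two ways
  have huniq : UniqueDiffWithinAt ℝ (Set.Ici (0:ℝ)) 0 := uniqueDiffOn_Ici 0 0 Set.self_mem_Ici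
  have hA : HasDerivWithinAt (fun t : ℝ => f (x + t • (y - x)))
      (inner ℝ v (y - x) : ℝ) (Set.Ici 0) 0 := hcomp.hasDerivWithinAt
  have hlin : HasDerivWithinAt (fun t : ℝ => D - t * D) (-D) (Set.Ici (0:ℝ)) 0 := by
    have : HasDerivAt (fun t : ℝ => D - t * D) (-(1 * D)) 0 :=
      ((hasDerivAt_id (0:ℝ)).mul_const D).const_sub D
    simpa using this.hasDerivWithinAt (s := Set.Ici (0:ℝ))
  have hB : HasDerivWithinAt (fun t : ℝ => f (x + t • (y - x))) (-D) (Set.Ici 0) 0 := by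
    apply hlin.congr_of_eventuallyEq
    · have hmem : Set.Iio (1:ℝ) ∈ nhdsWithin (0:ℝ) (Set.Ici 0) :=
        nhdsWithin_le_nhds (Iio_mem_nhds one_pos)
      have hself : Set.Ici (0:ℝ) ∈ nhdsWithin (0:ℝ) (Set.Ici 0) := self_mem_nhdsWithin
      filter_upwards [hmem, hself] with t ht1 ht0
      exact hseg t ht0 (le_of_lt ht1)
    · have h0 := hseg 0 le_rfl zero_le_one
      simpa using h0
  have hderiv : (inner ℝ v (y - x) : ℝ) = -D := by
    have h1 := hA.derivWithin huniq
    have h2 := hB.derivWithin huniq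
    rw [h1] at h2; exact h2
  have hinner : (inner ℝ v (x - y) : ℝ) = D := by
    have : (x : EuclideanSpace ℝ (Fin d)) - y = -(y - x) := by abel
    rw [this, inner_neg_right, hderiv, neg_neg]
  -- equality in Cauchy–Schwarz
  have hv1 : ‖v‖ = 1 := by
    have hle : D ≤ ‖v‖ * ‖x - y‖ := hinner ▸ real_inner_le_norm v (x - y)
    rw [hxyD] at hle
    have : 1 ≤ ‖v‖ := by
      by_contra h
      push_neg at h
      nlinarith
    linarith
  have heq : ‖x - y‖ • v = ‖v‖ • (x - y) := by
    apply inner_eq_norm_mul_iff_real.1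
    rw [hinner, hv1, hxyD, one_mul]
  have hpy : p = y := by
    rw [hxyD, hv1, one_smul] at heq
    rw [hp, heq]
    abel
  refine ⟨hpy ▸ hyS, ?_⟩
  rw [hpy, hxyD]
end

section
/- Let S ⊆ ℝ^d be a nonempty closed set, let d_S(x) = infDist(x, S), and suppose x ∉ S and d_S is differentiable at x. Then the nearest point of S to x is unique: there is exactly one p ∈ S with ‖x − p‖ = d_S(x), namely p = x − d_S(x)·∇d_S(x). -/
open Metric

private lemma nearest_key
    (d : ℕ) (S : Set (EuclideanSpace ℝ (Fin d)))
    (hS : S.Nonempty) (hScl : IsClosed S)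
    (x : EuclideanSpace ℝ (Fin d)) (hx : x ∉ S)
    (hdiff : DifferentiableAt ℝ (fun y => Metric.infDist y S) x)
    (q : EuclideanSpace ℝ (Fin d)) (hq : q ∈ S)
    (hqd : ‖x - q‖ = Metric.infDist x S) :
    q = x - Metric.infDist x S • gradient (fun y => Metric.infDist y S) x := by
  set f : EuclideanSpace ℝ (Fin d) → ℝ := fun y => Metric.infDist y S with hf
  set D : ℝ := Metric.infDist x S with hD
  set g := gradient f x with hg
  have hD0 : 0 < D := (hScl.notMem_iff_infDist_pos hS).mp hx
  have hgrad : HasGradientAt f g x := hdiff.hasGradientAt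
  have hfd : HasFDerivAt f ((InnerProductSpace.toDual ℝ _) g) x :=
    hasGradientAt_iff_hasFDerivAt.mp hgrad
  -- ‖g‖ ≤ 1
  have hlip : LipschitzWith 1 f := lipschitz_infDist_pt S
  have hg1 : ‖g‖ ≤ 1 := by
    have h1 := norm_fderiv_le_of_lipschitz ℝ (x₀ := x) hlip
    have h2 : fderiv ℝ f x = (InnerProductSpace.toDual ℝ _) g := hfd.fderiv
    rw [h2] at h1
    simpa using h1
  set v := q - x with hv
  have hvn : ‖v‖ = D := by rw [hv, norm_sub_rev, hqd]
  -- φ(t) = f (x + t • v) equals (1 - t) * D on Icc 0 1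
  set φ : ℝ → ℝ := fun t => f (x + t • v) with hφ
  have hφeq : ∀ t ∈ Set.Icc (0:ℝ) 1, φ t = D - t * D := by
    intro t ht
    have hle : φ t ≤ (1 - t) * D := by
      have : φ t ≤ dist (x + t • v) q := Metric.infDist_le_dist_of_mem hq
      refine this.trans_eq ?_
      rw [dist_eq_norm]
      have : x + t • v - q = (1 - t) • (x - q) := by
        rw [hv]; module
      rw [this, norm_smul, hqd]
      simp [abs_of_nonneg (by linarith [ht.2] : (0:ℝ) ≤ 1 - t)]
    have hge : (1 - t) * D ≤ φ t := by
      have h3 : D ≤ φ t + dist x (x + t • v) := by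
        have := Metric.infDist_le_infDist_add_dist (x := x) (y := x + t • v) (s := S)
        simpa [hφ] using this
      have h4 : dist x (x + t • v) = t * D := by
        rw [dist_eq_norm]
        simp only [sub_add_cancel_left, norm_neg, norm_smul, hvn]
        rw [Real.norm_eq_abs, abs_of_nonneg ht.1]
      linarith
    linarith
  -- derivative of φ at 0 from differentiability: ⟪g, v⟫
  have hline : HasDerivAt (fun t : ℝ => x + t • v) v 0 := by
    simpa using ((hasDerivAt_id (0:ℝ)).smul_const v).const_add x
  have hφd : HasDerivAt φ (inner ℝ g v : ℝ) 0 := by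
    have := HasFDerivAt.comp_hasDerivAt 0 (by simpa using hfd) hline
    simp only [InnerProductSpace.toDual_apply_apply] at this
    exact this
  -- derivative within Icc 0 1 from the explicit formula: -D
  have hψd : HasDerivWithinAt φ (-D) (Set.Icc (0:ℝ) 1) 0 := by
    have h5 : HasDerivWithinAt (fun t : ℝ => D - t * D) (-D) (Set.Icc (0:ℝ) 1) 0 := by
      have : HasDerivAt (fun t : ℝ => D - t * D) (-D) 0 := by
        simpa using ((hasDerivAt_id (0:ℝ)).mul_const D).const_sub D
      exact this.hasDerivWithinAt
    exact h5.congr hφeq (hφeq 0 (by constructor <;> norm_num))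
  have hud : UniqueDiffWithinAt ℝ (Set.Icc (0:ℝ) 1) 0 :=
    uniqueDiffOn_Icc (by norm_num) 0 (by constructor <;> norm_num)
  have hkey : (inner ℝ g v : ℝ) = -D := by
    rw [← hφd.hasDerivWithinAt.derivWithin hud, hψd.derivWithin hud]
  -- conclude q = x - D • g
  have hinner : (inner ℝ g (x - q) : ℝ) = D := by
    have : x - q = -v := by rw [hv]; abel
    rw [this, inner_neg_right, hkey, neg_neg]
  have hzero : ‖(x - q) - D • g‖ ^ 2 ≤ 0 := by
    rw [norm_sub_sq_real]
    have h6 : (inner ℝ (x - q) (D • g) : ℝ) = D * D := by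
      rw [real_inner_smul_right, real_inner_comm, hinner]
    have h7 : ‖x - q‖ ^ 2 = D ^ 2 := by rw [hqd]
    have h8 : ‖D • g‖ ^ 2 ≤ D ^ 2 := by
      rw [norm_smul, mul_pow, Real.norm_eq_abs, sq_abs]
      have hsq : (0:ℝ) ≤ 1 - ‖g‖ ^ 2 := by nlinarith [norm_nonneg g]
      nlinarith [mul_nonneg (sq_nonneg D) hsq]
    nlinarith
  have : (x - q) - D • g = 0 := by
    have := sq_nonneg ‖(x - q) - D • g‖
    have hn : ‖(x - q) - D • g‖ = 0 := by nlinarith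
    exact norm_eq_zero.mp hn
  have : x - q = D • g := by linear_combination (norm := module) this
  rw [← this]; abel

/-- **Uniqueness of the nearest point under differentiability of the distance.**
If `S ⊆ ℝ^d` is nonempty and closed, `x ∉ S`, and `d_S = infDist · S` is
differentiable at `x`, then `p = x − d_S(x) • ∇d_S(x)` is the unique point of `S`
at distance `d_S(x)` from `x`. -/
theorem nearest_point_unique_of_differentiable
    (d : ℕ) (S : Set (EuclideanSpace ℝ (Fin d)))
    (hS : S.Nonempty) (hScl : IsClosed S)
    (x : EuclideanSpace ℝ (Fin d)) (hx : x ∉ S)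
    (hdiff : DifferentiableAt ℝ (fun y => Metric.infDist y S) x)
    (p : EuclideanSpace ℝ (Fin d))
    (hp : p = x - Metric.infDist x S • gradient (fun y => Metric.infDist y S) x) :
    (p ∈ S ∧ ‖x - p‖ = Metric.infDist x S) ∧
      ∀ q ∈ S, ‖x - q‖ = Metric.infDist x S → q = p := by
  obtain ⟨q, hq, hqd⟩ := hScl.exists_infDist_eq_dist hS x
  have hqd' : ‖x - q‖ = Metric.infDist x S := by rw [← dist_eq_norm, hqd]
  have hqp : q = p := by
    rw [hp]; exact nearest_key d S hS hScl x hx hdiff q hq hqd'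
  refine ⟨⟨hqp ▸ hq, hqp ▸ hqd'⟩, fun r hr hrd => ?_⟩
  rw [hp]; exact nearest_key d S hS hScl x hx hdiff r hr hrd
end

section
/- Let S ⊆ ℝ^d be a nonempty closed set, let d_S(x) = infDist(x, S), and let x ∉ S. If there is a unique point p ∈ S with ‖x − p‖ = d_S(x), then d_S is differentiable at x and its gradient equals (x − p)/‖x − p‖. -/
open Metric Filter Asymptotics Topology RealInnerProductSpace

/-- Derivative of `y ↦ ‖y - p‖` at `x ≠ p` in a real inner product space. -/
lemma hasFDerivAt_norm_sub_const {E : Type*} [NormedAddCommGroup E] [InnerProductSpace ℝ E]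
    (p x : E) (h : x ≠ p) :
    HasFDerivAt (fun y => ‖y - p‖) (innerSL ℝ (‖x - p‖⁻¹ • (x - p))) x := by
  have hxp : ‖x - p‖ ≠ 0 := by simpa [sub_eq_zero] using h
  have hsub : HasFDerivAt (fun y : E => y - p) (ContinuousLinearMap.id ℝ E) x :=
    (hasFDerivAt_id x).sub_const p
  have hinner := hsub.inner ℝ hsub
  have hs : (⟪x - p, x - p⟫ : ℝ) ≠ 0 := by
    rw [real_inner_self_eq_norm_mul_norm]
    positivity
  have hcomp := (Real.hasDerivAt_sqrt hs).comp_hasFDerivAt x hinner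
  have hfun : (fun y : E => Real.sqrt ⟪y - p, y - p⟫) = fun y => ‖y - p‖ := by
    funext y
    rw [real_inner_self_eq_norm_mul_norm, Real.sqrt_mul_self (norm_nonneg _)]
  rw [Function.comp_def, hfun] at hcomp
  refine hcomp.congr_fderiv ?_
  ext t
  have hsq : Real.sqrt ⟪x - p, x - p⟫ = ‖x - p‖ := by
    rw [real_inner_self_eq_norm_mul_norm, Real.sqrt_mul_self (norm_nonneg _)]
  simp only [ContinuousLinearMap.smul_apply, ContinuousLinearMap.coe_comp', Function.comp_apply,
    ContinuousLinearMap.prod_apply, ContinuousLinearMap.coe_id', id_eq, fderivInnerCLM_apply,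
    innerSL_apply_apply, hsq, smul_eq_mul]
  rw [real_inner_smul_left, real_inner_comm (x - p) t]
  field_simp
  ring

/-- **Differentiability of the distance function at points with a unique nearest point.**
If `S ⊆ ℝ^d` is nonempty and closed, `x ∉ S`, and `p` is the unique nearest point
of `S` to `x`, then `d_S = infDist · S` is differentiable at `x` and its gradient
is `(x − p)/‖x − p‖`. -/
theorem distance_differentiable_of_unique_nearest
    (d : ℕ) (S : Set (EuclideanSpace ℝ (Fin d)))
    (hS : S.Nonempty) (hScl : IsClosed S)
    (x : EuclideanSpace ℝ (Fin d)) (hx : x ∉ S)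
    (p : EuclideanSpace ℝ (Fin d))
    (hp : p ∈ S) (hpd : ‖x - p‖ = Metric.infDist x S)
    (huniq : ∀ q ∈ S, ‖x - q‖ = Metric.infDist x S → q = p) :
    DifferentiableAt ℝ (fun y => Metric.infDist y S) x ∧
      gradient (fun y => Metric.infDist y S) x = ‖x - p‖⁻¹ • (x - p) := by
  have hD : 0 < Metric.infDist x S := (hScl.notMem_iff_infDist_pos hS).1 hx
  have hxp : x ≠ p := by
    intro h
    subst h
    rw [sub_self, norm_zero] at hpd
    exact hD.ne' hpd.symm
  have hr : ‖x - p‖ ≠ 0 := by simpa [sub_eq_zero] using hxp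
  set v : EuclideanSpace ℝ (Fin d) := ‖x - p‖⁻¹ • (x - p) with hvdef
  -- nearest point selection
  have hex : ∀ y : EuclideanSpace ℝ (Fin d), ∃ z, z ∈ S ∧ Metric.infDist y S = dist y z :=
    fun y => by obtain ⟨z, hz, hzd⟩ := hScl.exists_infDist_eq_dist hS y; exact ⟨z, hz, hzd⟩
  choose P hPS hPd using hex
  have hxP : ∀ y, ‖x - P y‖ ≠ 0 := by
    intro y h
    rw [norm_eq_zero, sub_eq_zero] at h
    exact hx (h ▸ hPS y)
  -- Step A: nearest points converge to p
  have hPtend : Tendsto P (𝓝 x) (𝓝 p) := by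
    apply tendsto_of_subseq_tendsto
    intro ns hns
    have hinfc : Tendsto (fun n => Metric.infDist (ns n) S) atTop (𝓝 (Metric.infDist x S)) :=
      ((Metric.continuous_infDist_pt S).tendsto x).comp hns
    have hdc : Tendsto (fun n => dist x (ns n)) atTop (𝓝 0) := by
      have := (tendsto_const_nhds (x := x) (f := atTop)).dist hns
      simpa using this
    have hsum : Tendsto (fun n => dist x (ns n) + Metric.infDist (ns n) S) atTop
        (𝓝 (0 + Metric.infDist x S)) := hdc.add hinfc
    rw [zero_add] at hsum
    have hfreq : ∃ᶠ n in atTop,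
        P (ns n) ∈ S ∩ Metric.closedBall x (Metric.infDist x S + 1) := by
      apply Eventually.frequently
      filter_upwards [hsum.eventually_le_const (by linarith : Metric.infDist x S
        < Metric.infDist x S + 1)] with n hn
      refine ⟨hPS _, ?_⟩
      rw [Metric.mem_closedBall]
      calc dist (P (ns n)) x ≤ dist (P (ns n)) (ns n) + dist (ns n) x := dist_triangle _ _ _
        _ = dist x (ns n) + Metric.infDist (ns n) S := by
            rw [dist_comm (P (ns n)), dist_comm (ns n) x, ← hPd]; ring
        _ ≤ Metric.infDist x S + 1 := hn
    have hK : IsCompact (S ∩ Metric.closedBall x (Metric.infDist x S + 1)) :=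
      (isCompact_closedBall x _).inter_left hScl
    obtain ⟨q, ⟨hqS, -⟩, φ, hφ, hq⟩ := hK.tendsto_subseq' hfreq
    have hnsφ : Tendsto (fun n => ns (φ n)) atTop (𝓝 x) := hns.comp hφ.tendsto_atTop
    have h1 : Tendsto (fun n => dist (ns (φ n)) (P (ns (φ n)))) atTop (𝓝 (dist x q)) :=
      hnsφ.dist hq
    have h2 : Tendsto (fun n => dist (ns (φ n)) (P (ns (φ n)))) atTop
        (𝓝 (Metric.infDist x S)) := by
      have : (fun n => dist (ns (φ n)) (P (ns (φ n))))
          = fun n => Metric.infDist (ns (φ n)) S := by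
        funext n; rw [hPd]
      rw [this]
      exact hinfc.comp hφ.tendsto_atTop
    have hdq : dist x q = Metric.infDist x S := tendsto_nhds_unique h1 h2
    have hqp : q = p := huniq q hqS (by rw [← dist_eq_norm]; exact hdq)
    exact ⟨φ, hqp ▸ hq⟩
  -- W y : unit vector from P y to x
  set W : EuclideanSpace ℝ (Fin d) → EuclideanSpace ℝ (Fin d) :=
    fun y => ‖x - P y‖⁻¹ • (x - P y) with hWdef
  have hWtend : Tendsto (fun y => W y - v) (𝓝 x) (𝓝 0) := by
    have hcont : ContinuousAt (fun q : EuclideanSpace ℝ (Fin d) => ‖x - q‖⁻¹ • (x - q)) p := by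
      exact (((continuousAt_const.sub continuousAt_id).norm.inv₀ hr).smul
        (continuousAt_const.sub continuousAt_id))
    have : Tendsto W (𝓝 x) (𝓝 v) := hcont.tendsto.comp hPtend
    simpa using this.sub_const v
  -- derivative of the upper barrier
  have hg : HasFDerivAt (fun y => ‖y - p‖) (innerSL ℝ v) x :=
    hasFDerivAt_norm_sub_const p x hxp
  -- main fderiv claim
  have hL : HasFDerivAt (fun y => Metric.infDist y S) (innerSL ℝ v) x := by
    refine HasFDerivAt.of_isLittleO ?_
    rw [Asymptotics.isLittleO_iff]
    intro c hc
    have h1 := Asymptotics.isLittleO_iff.mp hg.isLittleO (half_pos hc)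
    have h2 : ∀ᶠ y in 𝓝 x, ‖W y - v‖ ≤ c / 2 := by
      have hn : Tendsto (fun y => ‖W y - v‖) (𝓝 x) (𝓝 0) := by
        simpa using hWtend.norm
      exact hn.eventually_le_const (half_pos hc)
    filter_upwards [h1, h2] with y hy1 hy2
    -- upper bound
    have hupper : Metric.infDist y S - Metric.infDist x S - (innerSL ℝ v) (y - x)
        ≤ ‖y - p‖ - ‖x - p‖ - (innerSL ℝ v) (y - x) := by
      have hle : Metric.infDist y S ≤ ‖y - p‖ := by
        rw [← dist_eq_norm]; exact Metric.infDist_le_dist_of_mem hp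
      have := hpd
      linarith [hle]
    -- lower bound
    have hWnorm : ‖W y‖ = 1 := by
      rw [hWdef]
      simp only [norm_smul, norm_inv, norm_norm]
      exact inv_mul_cancel₀ (hxP y)
    have hlow1 : (⟪W y, y - P y⟫ : ℝ) ≤ Metric.infDist y S := by
      rw [hPd, dist_eq_norm]
      calc (⟪W y, y - P y⟫ : ℝ) ≤ ‖W y‖ * ‖y - P y‖ := real_inner_le_norm _ _
        _ = ‖y - P y‖ := by rw [hWnorm, one_mul]
    have hlow2 : Metric.infDist x S ≤ (⟪W y, x - P y⟫ : ℝ) := by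
      have hinner : (⟪W y, x - P y⟫ : ℝ) = ‖x - P y‖ := by
        rw [hWdef]
        simp only [real_inner_smul_left, real_inner_self_eq_norm_mul_norm]
        field_simp
      rw [hinner, ← dist_eq_norm]
      exact Metric.infDist_le_dist_of_mem (hPS y)
    have hlower : (⟪W y, y - x⟫ : ℝ)
        ≤ Metric.infDist y S - Metric.infDist x S := by
      have : (⟪W y, y - x⟫ : ℝ) = ⟪W y, y - P y⟫ - ⟪W y, x - P y⟫ := by
        rw [← inner_sub_right]
        congr 1
        abel
      linarith [hlow1, hlow2, this.le, this.ge]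
    have hlower' : -(c / 2 * ‖y - x‖)
        ≤ Metric.infDist y S - Metric.infDist x S - (innerSL ℝ v) (y - x) := by
      have hsplit : (⟪W y, y - x⟫ : ℝ) - ⟪v, y - x⟫ = ⟪W y - v, y - x⟫ := by
        rw [inner_sub_left]
      have habs : |(⟪W y - v, y - x⟫ : ℝ)| ≤ ‖W y - v‖ * ‖y - x‖ := abs_real_inner_le_norm _ _
      have hbd : -(c/2 * ‖y - x‖) ≤ (⟪W y - v, y - x⟫ : ℝ) := by
        have := neg_abs_le (⟪W y - v, y - x⟫ : ℝ)
        have hmul : ‖W y - v‖ * ‖y - x‖ ≤ c/2 * ‖y - x‖ :=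
          mul_le_mul_of_nonneg_right hy2 (norm_nonneg _)
        linarith
      have hSLv : ((innerSL ℝ v) (y - x) : ℝ) = ⟪v, y - x⟫ := rfl
      linarith [hlower, hsplit.le, hsplit.ge]
    -- combine
    rw [Real.norm_eq_abs, abs_le]
    have hyx : ‖y - x‖ = ‖(fun y => y - x) y‖ := rfl
    constructor
    · have : -(c * ‖y - x‖) ≤ -(c/2 * ‖y - x‖) := by
        have : c/2 * ‖y - x‖ ≤ c * ‖y - x‖ := by
          apply mul_le_mul_of_nonneg_right _ (norm_nonneg _)
          linarith
        linarith
      calc -(c * ‖(y - x : EuclideanSpace ℝ (Fin d))‖)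
          ≤ -(c/2 * ‖(y - x : EuclideanSpace ℝ (Fin d))‖) := this
        _ ≤ _ := hlower'
    · have hE1 : ‖y - p‖ - ‖x - p‖ - (innerSL ℝ v) (y - x) ≤ c/2 * ‖y - x‖ := by
        have := hy1
        rw [Real.norm_eq_abs] at this
        have := abs_le.mp this
        linarith [this.2]
      calc Metric.infDist y S - Metric.infDist x S - (innerSL ℝ v) (y - x)
          ≤ ‖y - p‖ - ‖x - p‖ - (innerSL ℝ v) (y - x) := hupper
        _ ≤ c/2 * ‖y - x‖ := hE1
        _ ≤ c * ‖y - x‖ := by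
            apply mul_le_mul_of_nonneg_right _ (norm_nonneg _); linarith
  have hgrad : HasGradientAt (fun y => Metric.infDist y S) v x := by
    rw [hasGradientAt_iff_hasFDerivAt]
    exact hL
  exact ⟨hgrad.differentiableAt, hgrad.gradient⟩
end

section
/- Let Ω ⊆ ℝ^d be a nonempty bounded open set with nonempty complement, let η be its signed distance function, fix ε > 0, set T_ε = {x : |η(x)| ≤ ε}, and assume η is continuously differentiable on an open neighborhood of T_ε. Then for every y ∈ T_ε, the projected point P(y) = y − η(y)∇η(y) lies on the boundary frontier Ω, and ‖y − P(y)‖ = |η(y)| = infDist(y, frontier Ω). -/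
open Metric Set

section Aux

variable {E : Type*} [NormedAddCommGroup E] [NormedSpace ℝ E] [ProperSpace E]

/-- The nearest point of `Ωᶜ` to a point of the open set `Ω` lies on the frontier. -/
lemma aux_closest_in {Ω : Set E} (hΩo : IsOpen Ω) (hcne : Ωᶜ.Nonempty) {y : E}
    (hy : y ∈ Ω) : ∃ z ∈ frontier Ω, dist y z = infDist y Ωᶜ := by
  obtain ⟨z, hzC, hdz⟩ := (isClosed_compl_iff.2 hΩo).exists_infDist_eq_dist hcne y
  refine ⟨z, ?_, hdz.symm⟩
  have hr : 0 < infDist y Ωᶜ :=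
    ((isClosed_compl_iff.2 hΩo).notMem_iff_infDist_pos hcne).1 (by simpa using hy)
  have hseg : ∀ θ ∈ Ico (0:ℝ) 1, y + θ • (z - y) ∈ Ω := by
    intro θ hθ
    by_contra hw
    have h1 : infDist y Ωᶜ ≤ dist y (y + θ • (z - y)) :=
      infDist_le_dist_of_mem (by simpa using hw)
    have h2 : dist y (y + θ • (z - y)) = θ * infDist y Ωᶜ := by
      rw [dist_eq_norm]
      have h3 : y - (y + θ • (z - y)) = θ • (y - z) := by module
      rw [h3, norm_smul, Real.norm_eq_abs, abs_of_nonneg hθ.1, ← dist_eq_norm, hdz]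
    nlinarith [hθ.2, hθ.1]
  have hcl : z ∈ closure Ω := by
    have hcont : Continuous fun θ : ℝ => y + θ • (z - y) :=
      continuous_const.add (continuous_id.smul continuous_const)
    have h1 : z ∈ (fun θ : ℝ => y + θ • (z - y)) '' closure (Ico (0:ℝ) 1) := by
      refine ⟨1, ?_, by simp⟩
      rw [closure_Ico zero_ne_one]; exact ⟨zero_le_one, le_rfl⟩
    have hsub : (fun θ : ℝ => y + θ • (z - y)) '' Ico (0:ℝ) 1 ⊆ Ω := image_subset_iff.2 hseg
    exact closure_mono hsub ((image_closure_subset_closure_image hcont) h1)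
  rw [frontier_eq_closure_inter_closure]
  exact ⟨hcl, subset_closure hzC⟩

/-- The nearest point of `closure Ω` to a point outside it lies on the frontier. -/
lemma aux_closest_out {Ω : Set E} (hne : Ω.Nonempty) {y : E}
    (hy : y ∉ closure Ω) : ∃ z ∈ frontier Ω, dist y z = infDist y (closure Ω) := by
  obtain ⟨z, hzC, hdz⟩ := isClosed_closure.exists_infDist_eq_dist hne.closure y
  refine ⟨z, ?_, hdz.symm⟩
  have hr : 0 < infDist y (closure Ω) :=
    (isClosed_closure.notMem_iff_infDist_pos hne.closure).1 hy
  have hseg : ∀ θ ∈ Ico (0:ℝ) 1, y + θ • (z - y) ∈ Ωᶜ := by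
    intro θ hθ
    by_contra hw
    have hwΩ : y + θ • (z - y) ∈ closure Ω := subset_closure (by simpa using hw)
    have h1 : infDist y (closure Ω) ≤ dist y (y + θ • (z - y)) := infDist_le_dist_of_mem hwΩ
    have h2 : dist y (y + θ • (z - y)) = θ * infDist y (closure Ω) := by
      rw [dist_eq_norm]
      have h3 : y - (y + θ • (z - y)) = θ • (y - z) := by module
      rw [h3, norm_smul, Real.norm_eq_abs, abs_of_nonneg hθ.1, ← dist_eq_norm, hdz]
    nlinarith [hθ.2, hθ.1]
  have hcl : z ∈ closure Ωᶜ := by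
    have hcont : Continuous fun θ : ℝ => y + θ • (z - y) :=
      continuous_const.add (continuous_id.smul continuous_const)
    have h1 : z ∈ (fun θ : ℝ => y + θ • (z - y)) '' closure (Ico (0:ℝ) 1) := by
      refine ⟨1, ?_, by simp⟩
      rw [closure_Ico zero_ne_one]; exact ⟨zero_le_one, le_rfl⟩
    have hsub : (fun θ : ℝ => y + θ • (z - y)) '' Ico (0:ℝ) 1 ⊆ Ωᶜ := image_subset_iff.2 hseg
    exact closure_mono hsub ((image_closure_subset_closure_image hcont) h1)
  rw [frontier_eq_closure_inter_closure]
  exact ⟨hzC, hcl⟩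

/-- Identify the directional derivative from one-sided linear behavior. -/
lemma aux_dirderiv {η : E → ℝ} {y u : E} {c r : ℝ}
    (hdiff : DifferentiableAt ℝ η y) (hr : 0 < r)
    (hseg : ∀ t ∈ Ico (0:ℝ) r, η (y + t • u) = η y + c * t) :
    fderiv ℝ η y u = c := by
  have hline : HasDerivAt (fun t : ℝ => y + t • u) u 0 := by
    simpa using ((hasDerivAt_id (0:ℝ)).smul_const u).const_add y
  have hF : HasFDerivAt η (fderiv ℝ η y) (y + (0:ℝ) • u) := by
    simpa using hdiff.hasFDerivAt
  have hg : HasDerivAt (fun t : ℝ => η (y + t • u)) (fderiv ℝ η y u) 0 :=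
    hF.comp_hasDerivAt 0 hline
  have hlin : HasDerivWithinAt (fun t : ℝ => η y + c * t) c (Ici (0:ℝ)) 0 := by
    simpa using (((hasDerivAt_id (0:ℝ)).const_mul c).const_add (η y)).hasDerivWithinAt
  have heq : (fun t : ℝ => η (y + t • u)) =ᶠ[nhdsWithin 0 (Ici (0:ℝ))]
      fun t : ℝ => η y + c * t :=
    Filter.eventuallyEq_of_mem (Ico_mem_nhdsGE hr) fun t ht => hseg t ht
  have hlin' : HasDerivWithinAt (fun t : ℝ => η (y + t • u)) c (Ici (0:ℝ)) 0 :=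
    hlin.congr_of_eventuallyEq heq (by simpa using hseg 0 ⟨le_rfl, hr⟩)
  have hu : UniqueDiffWithinAt ℝ (Ici (0:ℝ)) 0 := uniqueDiffOn_Ici 0 0 self_mem_Ici
  have h1 := hg.hasDerivWithinAt.derivWithin hu
  have h2 := hlin'.derivWithin hu
  rw [← h1, h2]

end Aux

section AuxInner

variable {E : Type*} [NormedAddCommGroup E] [InnerProductSpace ℝ E] [CompleteSpace E]

lemma aux_fderiv_inner (η : E → ℝ) (y v : E) :
    fderiv ℝ η y v = inner ℝ (gradient η y) v := by
  rw [← InnerProductSpace.toDual_apply_apply, gradient, LinearIsometryEquiv.apply_symm_apply]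

lemma aux_norm_gradient (η : E → ℝ) (y : E) : ‖gradient η y‖ = ‖fderiv ℝ η y‖ := by
  rw [gradient]; exact LinearIsometryEquiv.norm_map _ _

/-- Equality case of Cauchy–Schwarz used here. -/
lemma aux_cs_eq {g u : E} (hg : ‖g‖ ≤ 1) (hu : ‖u‖ = 1)
    (hinner : inner ℝ g u = (-1 : ℝ)) : g = -u := by
  have h : ‖g + u‖ ^ 2 ≤ 0 := by
    rw [norm_add_sq_real, hinner, hu]; nlinarith [norm_nonneg g]
  have h0 : ‖g + u‖ = 0 := le_antisymm (by nlinarith [norm_nonneg (g + u)]) (norm_nonneg _)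
  exact eq_neg_of_add_eq_zero_left (norm_eq_zero.1 h0)

end AuxInner

/-- **The closest-point projection onto the boundary.**
Let `Ω ⊆ ℝ^d` be a nonempty bounded open set with nonempty complement, `η` its
signed distance function, `ε > 0`, and `T_ε = {x : |η x| ≤ ε}`. If `η` is `C¹`
on an open neighborhood of `T_ε`, then for every `y ∈ T_ε` the projected point
`P(y) = y − η(y)∇η(y)` lies on `frontier Ω`, and
`‖y − P(y)‖ = |η(y)| = infDist y (frontier Ω)`. -/
theorem closest_point_projection_onto_boundary
    (d : ℕ) (Ω : Set (EuclideanSpace ℝ (Fin d)))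
    (hΩo : IsOpen Ω) (hne : Ω.Nonempty) (hbd : Bornology.IsBounded Ω)
    (hcne : Ωᶜ.Nonempty)
    (η : EuclideanSpace ℝ (Fin d) → ℝ)
    (hη : η = fun x => Metric.infDist x Ωᶜ - Metric.infDist x (closure Ω))
    (ε : ℝ) (hε : 0 < ε)
    (Tε : Set (EuclideanSpace ℝ (Fin d))) (hT : Tε = {x | |η x| ≤ ε})
    (hC1 : ∃ U : Set (EuclideanSpace ℝ (Fin d)),
      IsOpen U ∧ Tε ⊆ U ∧ ContDiffOn ℝ 1 η U) :
    ∀ y ∈ Tε,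
      (y - η y • gradient η y) ∈ frontier Ω ∧
      ‖y - (y - η y • gradient η y)‖ = |η y| ∧
      |η y| = Metric.infDist y (frontier Ω) := by
  obtain ⟨U, hUo, hTU, hC1U⟩ := hC1
  intro y hyT
  have hdiff : DifferentiableAt ℝ η y :=
    (hC1U.differentiableOn one_ne_zero).differentiableAt (hUo.mem_nhds (hTU hyT))
  rcases lt_trichotomy (η y) 0 with h0 | h0 | h0
  · -- η y < 0 : y is outside the closure
    have hyc : y ∉ closure Ω := by
      intro hmem
      have hc : infDist y (closure Ω) = 0 := infDist_zero_of_mem hmem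
      have hnn : (0:ℝ) ≤ infDist y Ωᶜ := infDist_nonneg
      rw [hη] at h0; simp only [hc] at h0; linarith
    have hynΩ : y ∉ Ω := fun h => hyc (subset_closure h)
    have hηy : η y = -infDist y (closure Ω) := by
      rw [hη]; simp [infDist_zero_of_mem (mem_compl hynΩ)]
    obtain ⟨z, hzF, hdz⟩ := aux_closest_out hne hyc
    have hzCl : z ∈ closure Ω := frontier_subset_closure hzF
    have hrdist : dist y z = -η y := by rw [hdz, hηy, neg_neg]
    have hrpos : 0 < -η y := by linarith
    have hrne : -η y ≠ 0 := ne_of_gt hrpos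
    set u := (-η y)⁻¹ • (z - y) with hu_def
    have hzy : ‖z - y‖ = -η y := by rw [← hrdist, dist_eq_norm, norm_sub_rev]
    have hru : (-η y) • u = z - y := by
      rw [hu_def, smul_smul, mul_inv_cancel₀ hrne, one_smul]
    have hun : ‖u‖ = 1 := by
      rw [hu_def, norm_smul, Real.norm_eq_abs, abs_inv, abs_of_pos hrpos, hzy,
        inv_mul_cancel₀ hrne]
    have hz_eq : z = y + (-η y) • u := by rw [hru]; abel
    have hseg : ∀ t ∈ Ico (0:ℝ) (-η y), η (y + t • u) = η y + 1 * t := by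
      intro t ht
      set w := y + t • u with hw
      have hdyw : dist y w = t := by
        rw [hw, dist_eq_norm]
        have h3 : y - (y + t • u) = (-t) • u := by module
        rw [h3, norm_smul, Real.norm_eq_abs, abs_neg, abs_of_nonneg ht.1, hun, mul_one]
      have hwn : w ∉ closure Ω := by
        intro hcon
        have h1 : infDist y (closure Ω) ≤ dist y w := infDist_le_dist_of_mem hcon
        rw [hdyw, hdz.symm, hrdist] at h1
        exact absurd h1 (not_le.2 ht.2)
      have hwΩc : w ∈ Ωᶜ := fun h => hwn (subset_closure h)
      have hdwz : dist w z = -η y - t := by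
        rw [hw, hz_eq, dist_add_left, dist_eq_norm, ← sub_smul, norm_smul,
          Real.norm_eq_abs, hun, mul_one, abs_of_nonpos (by linarith [ht.2.le]), neg_sub]
      have hle : infDist w (closure Ω) ≤ -η y - t := hdwz ▸ infDist_le_dist_of_mem hzCl
      have hge : -η y - t ≤ infDist w (closure Ω) := by
        have h4 := infDist_le_infDist_add_dist (x := y) (y := w) (s := closure Ω)
        rw [hdyw] at h4
        have h5 : infDist y (closure Ω) = -η y := by rw [hηy, neg_neg]
        linarith [h5 ▸ h4]
      have hval : infDist w (closure Ω) = -η y - t := le_antisymm hle hge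
      have hη_w : η w = -infDist w (closure Ω) := by
        rw [hη]; simp [infDist_zero_of_mem hwΩc]
      rw [hη_w, hval]; ring
    have hder : fderiv ℝ η y u = 1 := aux_dirderiv hdiff hrpos hseg
    have hinner : inner ℝ (gradient η y) u = (1:ℝ) := by rw [← aux_fderiv_inner, hder]
    have hev : (fun x => -infDist x (closure Ω)) =ᶠ[nhds y] η := by
      filter_upwards [isClosed_closure.isOpen_compl.mem_nhds hyc] with x hx
      have hxc : x ∈ Ωᶜ := fun h => hx (subset_closure h)
      rw [hη]; simp [infDist_zero_of_mem hxc]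
    have hF2 : HasFDerivAt (fun x => -infDist x (closure Ω)) (fderiv ℝ η y) y :=
      hdiff.hasFDerivAt.congr_of_eventuallyEq hev
    have hF3 : HasFDerivAt (fun x => infDist x (closure Ω)) (-(fderiv ℝ η y)) y := by
      simpa [Pi.neg_def] using hF2.neg
    have hlip : ‖fderiv ℝ η y‖ ≤ 1 := by
      have := hF3.le_of_lipschitz (lipschitz_infDist_pt (closure Ω))
      simpa using this
    have hgn : ‖gradient η y‖ ≤ 1 := by rw [aux_norm_gradient]; exact hlip
    have hgrad : gradient η y = u := by
      have h1 : ‖-gradient η y‖ ≤ 1 := by rwa [norm_neg]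
      have h2 : inner ℝ (-gradient η y) u = (-1:ℝ) := by rw [inner_neg_left, hinner]
      have := aux_cs_eq h1 hun h2
      simpa [neg_eq_iff_eq_neg] using congrArg Neg.neg this
    have hP : y - η y • gradient η y = z := by
      have : η y • gradient η y = -((-η y) • u) := by
        rw [hgrad, neg_smul, neg_neg]
      rw [this, sub_neg_eq_add, hru]; abel
    refine ⟨hP ▸ hzF, ?_, ?_⟩
    · rw [hP, ← dist_eq_norm, hrdist, abs_of_neg h0]
    · have h1 : infDist y (frontier Ω) ≤ -η y := hrdist ▸ infDist_le_dist_of_mem hzF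
      have h2 : -η y ≤ infDist y (frontier Ω) := by
        have h3 := infDist_le_infDist_of_subset (frontier_subset_closure (s := Ω))
          ⟨z, hzF⟩ (x := y)
        have h5 : infDist y (closure Ω) = -η y := by rw [hηy, neg_neg]
        linarith [h5 ▸ h3]
      rw [abs_of_neg h0]; linarith
  · -- η y = 0 : y is on the frontier
    have hyF : y ∈ frontier Ω := by
      have hyn : y ∉ Ω := by
        intro hyΩ
        have hp : 0 < infDist y Ωᶜ :=
          ((isClosed_compl_iff.2 hΩo).notMem_iff_infDist_pos hcne).1 (by simpa using hyΩ)
        have hc : infDist y (closure Ω) = 0 := infDist_zero_of_mem (subset_closure hyΩ)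
        rw [hη] at h0; simp only [hc] at h0; linarith
      have hyc : y ∈ closure Ω := by
        by_contra hcc
        have hp : 0 < infDist y (closure Ω) :=
          (isClosed_closure.notMem_iff_infDist_pos hne.closure).1 hcc
        have h0' : infDist y Ωᶜ = 0 := infDist_zero_of_mem (mem_compl hyn)
        rw [hη] at h0; simp only [h0'] at h0; linarith
      rw [hΩo.frontier_eq]; exact ⟨hyc, hyn⟩
    refine ⟨by simpa [h0] using hyF, by simp [h0], ?_⟩
    rw [h0, abs_zero, infDist_zero_of_mem hyF]
  · -- η y > 0 : y is inside Ω
    have hyΩ : y ∈ Ω := by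
      by_contra h
      have hz0 : infDist y Ωᶜ = 0 := infDist_zero_of_mem (by simpa using h)
      have hnn : (0:ℝ) ≤ infDist y (closure Ω) := infDist_nonneg
      rw [hη] at h0; simp only [hz0, zero_sub] at h0; linarith
    have hηy : η y = infDist y Ωᶜ := by
      rw [hη]; simp [infDist_zero_of_mem (subset_closure hyΩ)]
    obtain ⟨z, hzF, hdz⟩ := aux_closest_in hΩo hcne hyΩ
    have hzC : z ∈ Ωᶜ := by
      rw [hΩo.frontier_eq] at hzF; exact hzF.2
    have hrdist : dist y z = η y := by rw [hdz, hηy]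
    have hrne : η y ≠ 0 := ne_of_gt h0
    set u := (η y)⁻¹ • (z - y) with hu_def
    have hzy : ‖z - y‖ = η y := by rw [← hrdist, dist_eq_norm, norm_sub_rev]
    have hru : η y • u = z - y := by
      rw [hu_def, smul_smul, mul_inv_cancel₀ hrne, one_smul]
    have hun : ‖u‖ = 1 := by
      rw [hu_def, norm_smul, Real.norm_eq_abs, abs_inv, abs_of_pos h0, hzy,
        inv_mul_cancel₀ hrne]
    have hz_eq : z = y + η y • u := by rw [hru]; abel
    have hseg : ∀ t ∈ Ico (0:ℝ) (η y), η (y + t • u) = η y + (-1) * t := by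
      intro t ht
      set w := y + t • u with hw
      have hdyw : dist y w = t := by
        rw [hw, dist_eq_norm]
        have h3 : y - (y + t • u) = (-t) • u := by module
        rw [h3, norm_smul, Real.norm_eq_abs, abs_neg, abs_of_nonneg ht.1, hun, mul_one]
      have hwΩ : w ∈ Ω := by
        by_contra hcon
        have h1 : infDist y Ωᶜ ≤ dist y w := infDist_le_dist_of_mem (by simpa using hcon)
        rw [hdyw, ← hηy] at h1
        exact absurd h1 (not_le.2 ht.2)
      have hdwz : dist w z = η y - t := by
        rw [hw, hz_eq, dist_add_left, dist_eq_norm, ← sub_smul, norm_smul,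
          Real.norm_eq_abs, hun, mul_one, abs_of_nonpos (by linarith [ht.2.le]), neg_sub]
      have hle : infDist w Ωᶜ ≤ η y - t := hdwz ▸ infDist_le_dist_of_mem hzC
      have hge : η y - t ≤ infDist w Ωᶜ := by
        have h4 := infDist_le_infDist_add_dist (x := y) (y := w) (s := Ωᶜ)
        rw [hdyw, ← hηy] at h4
        linarith
      have hval : infDist w Ωᶜ = η y - t := le_antisymm hle hge
      have hη_w : η w = infDist w Ωᶜ := by
        rw [hη]; simp [infDist_zero_of_mem (subset_closure hwΩ)]
      rw [hη_w, hval]; ring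
    have hder : fderiv ℝ η y u = -1 := aux_dirderiv hdiff h0 hseg
    have hinner : inner ℝ (gradient η y) u = (-1:ℝ) := by rw [← aux_fderiv_inner, hder]
    have hev : (fun x => infDist x Ωᶜ) =ᶠ[nhds y] η := by
      filter_upwards [hΩo.mem_nhds hyΩ] with x hx
      rw [hη]; simp [infDist_zero_of_mem (subset_closure hx)]
    have hF2 : HasFDerivAt (fun x => infDist x Ωᶜ) (fderiv ℝ η y) y :=
      hdiff.hasFDerivAt.congr_of_eventuallyEq hev
    have hlip : ‖fderiv ℝ η y‖ ≤ 1 := by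
      have := hF2.le_of_lipschitz (lipschitz_infDist_pt Ωᶜ)
      simpa using this
    have hgn : ‖gradient η y‖ ≤ 1 := by rw [aux_norm_gradient]; exact hlip
    have hgrad : gradient η y = -u := aux_cs_eq hgn hun hinner
    have hP : y - η y • gradient η y = z := by
      rw [hgrad, smul_neg, sub_neg_eq_add, hru]; abel
    refine ⟨hP ▸ hzF, ?_, ?_⟩
    · rw [hP, ← dist_eq_norm, hrdist, abs_of_pos h0]
    · have h1 : infDist y (frontier Ω) ≤ η y := hrdist ▸ infDist_le_dist_of_mem hzF
      have h2 : η y ≤ infDist y (frontier Ω) := by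
        have hsub : frontier Ω ⊆ Ωᶜ := by
          rw [hΩo.frontier_eq]; exact fun x hx => hx.2
        have h3 := infDist_le_infDist_of_subset hsub ⟨z, hzF⟩ (x := y)
        rw [← hηy] at h3; exact h3
      rw [abs_of_pos h0]; linarith
end

section
/- Let d₁, d₂ ≥ 1, let s, t : ℝ^{d₁} → ℝ^{d₂} be differentiable at a point x₁ ∈ ℝ^{d₁}, and define f : ℝ^{d₁} × ℝ^{d₂} → ℝ^{d₁} × ℝ^{d₂} by f(x₁, x₂) = (x₁, x₂ ⊙ exp(s(x₁)) + t(x₁)) with componentwise multiplication ⊙ and componentwise exp. Then f is differentiable at (x₁, x₂) for every x₂, and the determinant of its (total) derivative at (x₁, x₂) equals exp(∑_{i=1}^{d₂} s(x₁)_i); in particular, the Jacobian determinant is strictly positive and does not depend on the derivatives of s or t. -/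
open ContinuousLinearMap in
/-- **Jacobian determinant of a real NVP affine coupling layer.**
If `s, t : ℝ^{d₁} → ℝ^{d₂}` are differentiable at `x₁`, then the coupling map
`f(x₁, x₂) = (x₁, x₂ ⊙ exp(s(x₁)) + t(x₁))` is differentiable at `(x₁, x₂)` for
every `x₂`, and the determinant of its total derivative there equals
`exp(∑ i, s(x₁)_i)`; in particular it is strictly positive and independent of
the derivatives of `s` and `t`. -/
theorem realNVP_coupling_jacobian_det
    (d₁ d₂ : ℕ) (hd₁ : 1 ≤ d₁) (hd₂ : 1 ≤ d₂)
    (s t : (Fin d₁ → ℝ) → (Fin d₂ → ℝ))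
    (x₁ : Fin d₁ → ℝ)
    (hs : DifferentiableAt ℝ s x₁) (ht : DifferentiableAt ℝ t x₁)
    (f : (Fin d₁ → ℝ) × (Fin d₂ → ℝ) → (Fin d₁ → ℝ) × (Fin d₂ → ℝ))
    (hf : f = fun p => (p.1, fun i => p.2 i * Real.exp (s p.1 i) + t p.1 i)) :
    ∀ x₂ : Fin d₂ → ℝ,
      DifferentiableAt ℝ f (x₁, x₂) ∧
      LinearMap.det (fderiv ℝ f (x₁, x₂)).toLinearMap
        = Real.exp (∑ i : Fin d₂, s x₁ i) ∧
      0 < LinearMap.det (fderiv ℝ f (x₁, x₂)).toLinearMap := by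
  subst hf
  intro x₂
  set S : (Fin d₁ → ℝ) →L[ℝ] (Fin d₂ → ℝ) := fderiv ℝ s x₁ with hS
  set T : (Fin d₁ → ℝ) →L[ℝ] (Fin d₂ → ℝ) := fderiv ℝ t x₁ with hT
  set Li : Fin d₂ → ((Fin d₁ → ℝ) × (Fin d₂ → ℝ) →L[ℝ] ℝ) := fun i =>
    x₂ i • (Real.exp (s x₁ i) • ((proj i).comp (S.comp (fst ℝ _ _)))) +
      Real.exp (s x₁ i) • ((proj i).comp (snd ℝ _ _)) +
      (proj i).comp (T.comp (fst ℝ _ _)) with hLi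
  set L : (Fin d₁ → ℝ) × (Fin d₂ → ℝ) →L[ℝ] (Fin d₁ → ℝ) × (Fin d₂ → ℝ) :=
    (fst ℝ _ _).prod (pi Li) with hL
  have hder : HasFDerivAt
      (fun p : (Fin d₁ → ℝ) × (Fin d₂ → ℝ) =>
        (p.1, fun i => p.2 i * Real.exp (s p.1 i) + t p.1 i))
      L (x₁, x₂) := by
    apply HasFDerivAt.prodMk (hasFDerivAt_fst)
    apply hasFDerivAt_pi''
    intro i
    have hsc : HasFDerivAt (fun p : (Fin d₁ → ℝ) × (Fin d₂ → ℝ) => s p.1 i)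
        ((proj i).comp (S.comp (fst ℝ _ _))) (x₁, x₂) := by
      have h1 : HasFDerivAt (fun p : (Fin d₁ → ℝ) × (Fin d₂ → ℝ) => s p.1)
          (S.comp (fst ℝ _ _)) (x₁, x₂) := hs.hasFDerivAt.comp _ hasFDerivAt_fst
      exact (ContinuousLinearMap.hasFDerivAt (proj i)).comp _ h1
    have hexp : HasFDerivAt (fun p : (Fin d₁ → ℝ) × (Fin d₂ → ℝ) => Real.exp (s p.1 i))
        (Real.exp (s x₁ i) • ((proj i).comp (S.comp (fst ℝ _ _)))) (x₁, x₂) := hsc.exp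
    have hv : HasFDerivAt (fun p : (Fin d₁ → ℝ) × (Fin d₂ → ℝ) => p.2 i)
        ((proj i).comp (snd ℝ _ _)) (x₁, x₂) := by
      have h0 : HasFDerivAt (fun p : (Fin d₁ → ℝ) × (Fin d₂ → ℝ) => p.2)
          (snd ℝ _ _) (x₁, x₂) := hasFDerivAt_snd
      exact (ContinuousLinearMap.hasFDerivAt (proj i)).comp _ h0
    have htc : HasFDerivAt (fun p : (Fin d₁ → ℝ) × (Fin d₂ → ℝ) => t p.1 i)
        ((proj i).comp (T.comp (fst ℝ _ _))) (x₁, x₂) := by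
      have h1 : HasFDerivAt (fun p : (Fin d₁ → ℝ) × (Fin d₂ → ℝ) => t p.1)
          (T.comp (fst ℝ _ _)) (x₁, x₂) := ht.hasFDerivAt.comp _ hasFDerivAt_fst
      exact (ContinuousLinearMap.hasFDerivAt (proj i)).comp _ h1
    have := (hv.mul hexp).add htc
    convert this using 1
    rfl
    rfl
  have hfd := hder.fderiv
  rw [hfd]
  have hdet : LinearMap.det L.toLinearMap = Real.exp (∑ i : Fin d₂, s x₁ i) := by
    classical
    let b := (Pi.basisFun ℝ (Fin d₁)).prod (Pi.basisFun ℝ (Fin d₂))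
    rw [← LinearMap.det_toMatrix b]
    have hM : LinearMap.toMatrix b b L.toLinearMap =
        Matrix.fromBlocks 1 0
          ((LinearMap.toMatrix b b L.toLinearMap).toBlocks₂₁)
          (Matrix.diagonal fun i => Real.exp (s x₁ i)) := by
      apply Matrix.ext
      rintro (i | i) (j | j) <;>
        simp [Matrix.fromBlocks, Matrix.toBlocks₁₁, Matrix.toBlocks₁₂,
          Matrix.toBlocks₂₁, Matrix.toBlocks₂₂, LinearMap.toMatrix_apply, b,
          Module.Basis.prod_apply, Module.Basis.prod_repr_inl, Module.Basis.prod_repr_inr,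
          Pi.basisFun_repr, Pi.basisFun_apply, hL, hLi, Matrix.one_apply,
          Matrix.diagonal_apply, Pi.single_apply, eq_comm, mul_comm]
    rw [hM, Matrix.det_fromBlocks_zero₁₂]
    simp [Real.exp_sum]
  exact ⟨hder.differentiableAt, hdet, hdet ▸ Real.exp_pos _⟩
end
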